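/- Let G be a finite acyclic directed graph, and let u₁,...,uₙ and v₁,...,vₙ be vertices such that whenever i < i' and j > j', every path from u_i to v_j intersects every path from u_{i'} to v_{j'}. Then the number of n-tuples of pairwise vertex-disjoint paths (P₁,...,Pₙ) with Pᵢ from uᵢ to vᵢ equals det(a_{i,j}), where a_{i,j} is the number of directed paths from uᵢ to vⱼ. -/

import Mathlib

/-- A directed path in a digraph with edge relation `E`, from `u` to `v`, recorded
as its (nonempty) list of vertices. -/
def IsDiPath {V : Type*} (E : V → V → Prop) (u v : V) (l : List V) : Prop :=
  l ≠ [] ∧ l.head? = some u ∧ l.getLast? = some v ∧ l.Chain' E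

namespace LGVAux

open List

variable {V : Type*} [DecidableEq V]
set_option linter.unusedSectionVars false

/-- Prefix of `l` up to and including (the first occurrence of) `x`. -/
def pre (l : List V) (x : V) : List V := l.take (l.idxOf x + 1)

/-- The part of `l` strictly after (the first occurrence of) `x`. -/
def post (l : List V) (x : V) : List V := l.drop (l.idxOf x + 1)

theorem pre_append_post (l : List V) (x : V) : pre l x ++ post l x = l :=
  l.take_append_drop _

theorem length_pre {l : List V} {x : V} (h : x ∈ l) :
    (pre l x).length = l.idxOf x + 1 := by
  have := List.idxOf_lt_length_iff.mpr h
  simp [pre]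
  omega

theorem getLast?_pre {l : List V} {x : V} (h : x ∈ l) :
    (pre l x).getLast? = some x := by
  have hlt := List.idxOf_lt_length_iff.mpr h
  rw [pre, List.getLast?_take, if_neg (Nat.succ_ne_zero _)]
  simp only [Nat.add_sub_cancel]
  rw [List.getElem?_eq_getElem hlt, List.getElem_idxOf hlt]
  rfl

theorem pre_ne_nil {l : List V} {x : V} (h : x ∈ l) : pre l x ≠ [] := by
  have := length_pre h
  intro hc
  rw [hc] at this
  simp at this

theorem mem_pre {l : List V} {x : V} (h : x ∈ l) : x ∈ pre l x := by
  have := getLast?_pre h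
  rw [List.getLast?_eq_some_iff] at this
  obtain ⟨ys, hys⟩ := this
  simp [hys]

theorem exists_pre_concat {l : List V} {x : V} (h : x ∈ l) :
    ∃ t, pre l x = t ++ [x] := by
  have := getLast?_pre h
  rw [List.getLast?_eq_some_iff] at this
  exact this

theorem head?_pre {l : List V} {x : V} (h : x ∈ l) : (pre l x).head? = l.head? := by
  conv_rhs => rw [← pre_append_post l x]
  rw [List.head?_append]
  obtain ⟨a, t, hat⟩ := List.exists_cons_of_ne_nil (pre_ne_nil h)
  rw [hat]
  rfl

theorem not_mem_post {l : List V} {x : V} (hn : l.Nodup) (h : x ∈ l) :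
    x ∉ post l x := by
  rw [← pre_append_post l x, List.nodup_append] at hn
  exact fun hc => hn.2.2 x (mem_pre h) x hc rfl

theorem idxOf_pre {l : List V} {x : V} (h : x ∈ l) :
    (pre l x).idxOf x = l.idxOf x := by
  conv_rhs => rw [← pre_append_post l x]
  rw [List.idxOf_append_of_mem (mem_pre h)]

theorem chain'_pre {E : V → V → Prop} {l : List V} (hc : l.Chain' E) (x : V) :
    (pre l x).Chain' E :=
  hc.prefix (l.take_prefix _)

theorem chain'_cons_post {E : V → V → Prop} {l : List V} (hc : l.Chain' E)
    {x : V} (h : x ∈ l) : (x :: post l x).Chain' E := by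
  obtain ⟨t, ht⟩ := exists_pre_concat h
  apply hc.suffix
  refine ⟨t, ?_⟩
  conv_rhs => rw [← pre_append_post l x]
  rw [ht]
  simp

/-- Glue: prefix of `l` up to `x`, followed by the part of `m` after `x`. -/
def glue (l m : List V) (x : V) : List V := pre l x ++ post m x

theorem mem_glue {l m : List V} {x : V} (h : x ∈ l) : x ∈ glue l m x :=
  List.mem_append_left _ (mem_pre h)

theorem head?_glue {l m : List V} {x : V} (h : x ∈ l) :
    (glue l m x).head? = l.head? := by
  rw [glue, List.head?_append]
  obtain ⟨a, t, hat⟩ := List.exists_cons_of_ne_nil (pre_ne_nil h)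
  rw [← head?_pre h, hat]
  rfl

theorem getLast?_glue {l m : List V} {x : V} (hl : x ∈ l) (hm : x ∈ m) :
    (glue l m x).getLast? = m.getLast? := by
  rw [glue, List.getLast?_append]
  conv_rhs => rw [← pre_append_post m x, List.getLast?_append]
  rcases eq_or_ne (post m x) [] with h | h
  · rw [h]
    simp [getLast?_pre hl, getLast?_pre hm]
  · cases hq : (post m x).getLast? with
    | none => exact absurd (List.getLast?_eq_none_iff.mp hq) h
    | some y => rfl

theorem chain'_glue {E : V → V → Prop} {l m : List V} (hcl : l.Chain' E)
    (hcm : m.Chain' E) {x : V} (hl : x ∈ l) (hm : x ∈ m) :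
    (glue l m x).Chain' E := by
  refine List.IsChain.append (chain'_pre hcl x) ((chain'_cons_post hcm hm).tail) ?_
  intro a ha b hb
  rw [getLast?_pre hl] at ha
  obtain rfl : x = a := by simpa using ha
  have := List.isChain_cons.mp (chain'_cons_post hcm hm)
  exact this.1 b (by simpa using hb)

theorem idxOf_glue {l m : List V} {x : V} (hl : x ∈ l) :
    (glue l m x).idxOf x = l.idxOf x := by
  rw [glue, List.idxOf_append_of_mem (mem_pre hl), idxOf_pre hl]

theorem pre_glue {l m : List V} {x : V} (hl : x ∈ l) :
    pre (glue l m x) x = pre l x := by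
  rw [pre, idxOf_glue hl, glue, ← length_pre hl, List.take_left]

theorem post_glue {l m : List V} {x : V} (hl : x ∈ l) :
    post (glue l m x) x = post m x := by
  rw [post, idxOf_glue hl, glue, ← length_pre hl, List.drop_left]

theorem glue_glue {l m : List V} {x : V} (hl : x ∈ l) (hm : x ∈ m) :
    glue (glue l m x) (glue m l x) x = l := by
  rw [glue, pre_glue hl, post_glue hm, pre_append_post]

theorem count_glue (l m : List V) {x : V} (y : V) :
    (glue l m x).count y + (glue m l x).count y = l.count y + m.count y := by
  conv_rhs => rw [← pre_append_post l x, ← pre_append_post m x]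
  simp only [glue, List.count_append]
  omega

theorem glue_isDiPath {E : V → V → Prop} {a b c d : V} {l m : List V}
    (hl : IsDiPath E a b l) (hm : IsDiPath E c d m) {x : V}
    (hxl : x ∈ l) (hxm : x ∈ m) : IsDiPath E a d (glue l m x) := by
  obtain ⟨-, hh, hla, hc⟩ := hl
  obtain ⟨-, -, hld, hcm⟩ := hm
  refine ⟨?_, ?_, ?_, chain'_glue hc hcm hxl hxm⟩
  · intro hcon
    exact pre_ne_nil hxl (by simpa [glue] using List.append_eq_nil_iff.mp hcon |>.1)
  · rw [head?_glue hxl, hh]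
  · rw [getLast?_glue hxl hxm, hld]



-- ## acyclicity and finiteness

theorem chain'_nodup {E : V → V → Prop}
    (hacyclic : ∀ (w : V) (l : List V), IsDiPath E w w l → l.length ≤ 1) :
    ∀ l : List V, l.Chain' E → l.Nodup := by
  intro l
  induction l with
  | nil => simp
  | cons a t ih =>
    intro hc
    rw [List.nodup_cons]
    refine ⟨?_, ih hc.tail⟩
    intro ha
    obtain ⟨s, r, rfl⟩ := List.append_of_mem ha
    have hpre : (a :: (s ++ [a])).Chain' E := hc.prefix ⟨r, by simp⟩
    have := hacyclic a (a :: (s ++ [a]))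
      ⟨by simp, rfl, by rw [show a :: (s ++ [a]) = (a :: s) ++ [a] by simp, List.getLast?_concat], hpre⟩
    simp at this

theorem IsDiPath.nodup {E : V → V → Prop}
    (hacyclic : ∀ (w : V) (l : List V), IsDiPath E w w l → l.length ≤ 1)
    {a b : V} {l : List V} (h : IsDiPath E a b l) : l.Nodup :=
  chain'_nodup hacyclic l h.2.2.2

theorem dipath_finite [Fintype V] {E : V → V → Prop}
    (hacyclic : ∀ (w : V) (l : List V), IsDiPath E w w l → l.length ≤ 1)
    (a b : V) : {l : List V | IsDiPath E a b l}.Finite :=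
  (List.finite_length_le V (Fintype.card V)).subset fun _ hl =>
    (chain'_nodup hacyclic _ hl.2.2.2).length_le_card

-- ## double points

variable {n : ℕ}

def DblAt (P : Fin n → List V) (x : V) : Prop :=
  ∃ k l : Fin n, k ≠ l ∧ x ∈ P k ∧ x ∈ P l

def Dbl (P : Fin n → List V) : Prop := ∃ x, DblAt P x

theorem choose_congr {α : Sort*} {p q : α → Prop} (h : ∃ x, p x) (h' : ∃ x, q x)
    (e : p = q) : h.choose = h'.choose := by subst e; rfl

theorem min'_congr {α : Type*} [LinearOrder α] {s t : Finset α} (hs : s.Nonempty)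
    (ht : t.Nonempty) (e : s = t) : s.min' hs = t.min' ht := by subst e; rfl

noncomputable def dblX (P : Fin n → List V) (h : Dbl P) : V := h.choose

theorem dblX_spec (P : Fin n → List V) (h : Dbl P) : DblAt P (dblX P h) :=
  h.choose_spec

theorem dblX_congr (P Q : Fin n → List V) (h : Dbl P) (h' : Dbl Q)
    (e : DblAt P = DblAt Q) : dblX P h = dblX Q h' := choose_congr h h' e

theorem dblI_nonempty (P : Fin n → List V) (h : Dbl P) :
    (Finset.univ.filter fun k => dblX P h ∈ P k).Nonempty := by
  obtain ⟨k, l, _, hk, _⟩ := dblX_spec P h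
  exact ⟨k, by simp [hk]⟩

noncomputable def dblI (P : Fin n → List V) (h : Dbl P) : Fin n :=
  (Finset.univ.filter fun k => dblX P h ∈ P k).min' (dblI_nonempty P h)

theorem dblJ_nonempty (P : Fin n → List V) (h : Dbl P) :
    (Finset.univ.filter fun k => k ≠ dblI P h ∧ dblX P h ∈ P k).Nonempty := by
  obtain ⟨k, l, ne, hk, hl⟩ := dblX_spec P h
  rcases eq_or_ne k (dblI P h) with rfl | hk'
  · exact ⟨l, by simp [ne.symm, hl]⟩
  · exact ⟨k, by simp [hk', hk]⟩

noncomputable def dblJ (P : Fin n → List V) (h : Dbl P) : Fin n :=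
  (Finset.univ.filter fun k => k ≠ dblI P h ∧ dblX P h ∈ P k).min' (dblJ_nonempty P h)

theorem mem_dblI (P : Fin n → List V) (h : Dbl P) : dblX P h ∈ P (dblI P h) := by
  have := Finset.min'_mem _ (dblI_nonempty P h)
  simpa [dblI] using this

theorem dblJ_props (P : Fin n → List V) (h : Dbl P) :
    dblJ P h ≠ dblI P h ∧ dblX P h ∈ P (dblJ P h) := by
  have := Finset.min'_mem _ (dblJ_nonempty P h)
  simpa [dblJ] using this

noncomputable def dblQ (P : Fin n → List V) (h : Dbl P) : Fin n → List V := fun k =>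
  if k = dblI P h then glue (P (dblJ P h)) (P (dblI P h)) (dblX P h)
  else if k = dblJ P h then glue (P (dblI P h)) (P (dblJ P h)) (dblX P h)
  else P k

theorem dblQ_I (P : Fin n → List V) (h : Dbl P) :
    dblQ P h (dblI P h) = glue (P (dblJ P h)) (P (dblI P h)) (dblX P h) :=
  if_pos rfl

theorem dblQ_J (P : Fin n → List V) (h : Dbl P) :
    dblQ P h (dblJ P h) = glue (P (dblI P h)) (P (dblJ P h)) (dblX P h) := by
  rw [dblQ, if_neg (dblJ_props P h).1, if_pos rfl]

theorem dblQ_other (P : Fin n → List V) (h : Dbl P) {k : Fin n}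
    (h1 : k ≠ dblI P h) (h2 : k ≠ dblJ P h) : dblQ P h k = P k := by
  rw [dblQ, if_neg h1, if_neg h2]

theorem dbl_dblQ (P : Fin n → List V) (h : Dbl P) : Dbl (dblQ P h) :=
  ⟨dblX P h, dblI P h, dblJ P h, (dblJ_props P h).1.symm,
    by rw [dblQ_I]; exact mem_glue (dblJ_props P h).2,
    by rw [dblQ_J]; exact mem_glue (mem_dblI P h)⟩

theorem mem_x_dblQ (P : Fin n → List V) (h : Dbl P) (k : Fin n) :
    dblX P h ∈ dblQ P h k ↔ dblX P h ∈ P k := by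
  rcases eq_or_ne k (dblI P h) with rfl | h1
  · simp only [dblQ_I]
    exact ⟨fun _ => mem_dblI P h, fun _ => mem_glue (dblJ_props P h).2⟩
  rcases eq_or_ne k (dblJ P h) with rfl | h2
  · simp only [dblQ_J]
    exact ⟨fun _ => (dblJ_props P h).2, fun _ => mem_glue (mem_dblI P h)⟩
  · rw [dblQ_other P h h1 h2]

theorem sum_split {f g : Fin n → ℕ} {i j : Fin n} (hij : i ≠ j)
    (hoth : ∀ k, k ≠ i → k ≠ j → f k = g k) (hpair : f i + f j = g i + g j) :
    ∑ k, f k = ∑ k, g k := by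
  have hjmem : j ∈ Finset.univ.erase i :=
    Finset.mem_erase.mpr ⟨hij.symm, Finset.mem_univ j⟩
  rw [← Finset.add_sum_erase _ f (Finset.mem_univ i),
      ← Finset.add_sum_erase _ g (Finset.mem_univ i),
      ← Finset.add_sum_erase _ f hjmem, ← Finset.add_sum_erase _ g hjmem]
  have hS : ∑ k ∈ (Finset.univ.erase i).erase j, f k
      = ∑ k ∈ (Finset.univ.erase i).erase j, g k := by
    refine Finset.sum_congr rfl fun k hk => ?_
    rw [Finset.mem_erase, Finset.mem_erase] at hk
    exact hoth k hk.2.1 hk.1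
  rw [hS, ← add_assoc, ← add_assoc, hpair]

theorem count_dblQ (P : Fin n → List V) (h : Dbl P) (y : V) :
    ∑ k, (dblQ P h k).count y = ∑ k, (P k).count y := by
  refine sum_split (i := dblI P h) (j := dblJ P h) (dblJ_props P h).1.symm
    (fun k h1 h2 => by rw [dblQ_other P h h1 h2]) ?_
  rw [dblQ_I, dblQ_J]
  have := count_glue (P (dblJ P h)) (P (dblI P h)) (x := dblX P h) y
  omega

theorem dblAt_iff_two_le (P : Fin n → List V) (hnod : ∀ k, (P k).Nodup) (y : V) :
    DblAt P y ↔ 2 ≤ ∑ k, (P k).count y := by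
  constructor
  · rintro ⟨k, l, ne, hk, hl⟩
    have hsub : (P k).count y + (P l).count y ≤ ∑ k, (P k).count y := by
      have := Finset.sum_le_sum_of_subset (f := fun x => (P x).count y)
        (Finset.subset_univ ({k, l} : Finset (Fin n)))
      rwa [Finset.sum_pair ne] at this
    have hk1 : 0 < (P k).count y := List.count_pos_iff.mpr hk
    have hl1 : 0 < (P l).count y := List.count_pos_iff.mpr hl
    omega
  · intro h2
    by_contra hno
    rcases em (∃ k, y ∈ P k) with ⟨k, hk⟩ | hnone
    · have hle : (P k).count y ≤ 1 := List.nodup_iff_count_le_one.mp (hnod k) y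
      have hrest : ∑ l ∈ Finset.univ.erase k, (P l).count y = 0 := by
        refine Finset.sum_eq_zero fun l hl => ?_
        refine List.count_eq_zero_of_not_mem fun hc => hno ⟨l, k, (Finset.mem_erase.mp hl).1, hc, hk⟩
      rw [← Finset.add_sum_erase _ _ (Finset.mem_univ k), hrest] at h2
      omega
    · have hz : ∑ k, (P k).count y = 0 :=
        Finset.sum_eq_zero fun k _ => List.count_eq_zero_of_not_mem fun hc => hnone ⟨k, hc⟩
      omega

theorem dblAt_dblQ (P : Fin n → List V) (h : Dbl P) (hnodP : ∀ k, (P k).Nodup)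
    (hnodQ : ∀ k, (dblQ P h k).Nodup) : DblAt (dblQ P h) = DblAt P := by
  funext y
  apply propext
  rw [dblAt_iff_two_le _ hnodQ, dblAt_iff_two_le _ hnodP, count_dblQ]

theorem dblQ_dblQ (P : Fin n → List V) (h : Dbl P) (hnodP : ∀ k, (P k).Nodup)
    (hnodQ : ∀ k, (dblQ P h k).Nodup) (h2 : Dbl (dblQ P h)) :
    dblQ (dblQ P h) h2 = P ∧ dblI (dblQ P h) h2 = dblI P h ∧ dblJ (dblQ P h) h2 = dblJ P h := by
  have ex : dblX (dblQ P h) h2 = dblX P h :=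
    dblX_congr _ _ _ _ (dblAt_dblQ P h hnodP hnodQ)
  have eI : dblI (dblQ P h) h2 = dblI P h := by
    refine min'_congr _ _ ?_
    ext k
    simp only [Finset.mem_filter, Finset.mem_univ, true_and, ex, mem_x_dblQ]
  have eJ : dblJ (dblQ P h) h2 = dblJ P h := by
    refine min'_congr _ _ ?_
    ext k
    simp only [Finset.mem_filter, Finset.mem_univ, true_and, ex, eI, mem_x_dblQ]
  refine ⟨?_, eI, eJ⟩
  funext k
  rcases eq_or_ne k (dblI P h) with rfl | h1
  · rw [show dblI P h = dblI (dblQ P h) h2 from eI.symm, dblQ_I, eI, eJ, ex,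
      dblQ_I, dblQ_J, glue_glue (mem_dblI P h) (dblJ_props P h).2]
  rcases eq_or_ne k (dblJ P h) with rfl | hne2
  · rw [show dblJ P h = dblJ (dblQ P h) h2 from eJ.symm, dblQ_J, eI, eJ, ex,
      dblQ_I, dblQ_J, glue_glue (dblJ_props P h).2 (mem_dblI P h)]
  · rw [dblQ_other _ _ (by rw [eI]; exact h1) (by rw [eJ]; exact hne2),
      dblQ_other _ _ h1 hne2]

theorem dblQ_isDiPath {E : V → V → Prop} (u v : Fin n → V) (σ : Equiv.Perm (Fin n))
    (P : Fin n → List V) (hP : ∀ k, IsDiPath E (u (σ k)) (v k) (P k)) (h : Dbl P)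
    (k : Fin n) :
    IsDiPath E (u ((σ * Equiv.swap (dblI P h) (dblJ P h)) k)) (v k) (dblQ P h k) := by
  rcases eq_or_ne k (dblI P h) with rfl | h1
  · rw [dblQ_I, Equiv.Perm.mul_apply, Equiv.swap_apply_left]
    exact glue_isDiPath (hP (dblJ P h)) (hP (dblI P h)) (dblJ_props P h).2 (mem_dblI P h)
  rcases eq_or_ne k (dblJ P h) with rfl | h2
  · rw [dblQ_J, Equiv.Perm.mul_apply, Equiv.swap_apply_right]
    exact glue_isDiPath (hP (dblI P h)) (hP (dblJ P h)) (mem_dblI P h) (dblJ_props P h).2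
  · rw [dblQ_other P h h1 h2, Equiv.Perm.mul_apply, Equiv.swap_apply_of_ne_of_ne h1 h2]
    exact hP k

end LGVAux

open LGVAux

/-- Lindström–Gessel–Viennot lemma: in a finite acyclic digraph, if the sources
`u₁,...,uₙ` and sinks `v₁,...,vₙ` are compatible (whenever `i < i'` and `j' < j`,
every path `uᵢ → vⱼ` intersects every path `u_{i'} → v_{j'}`), then the number of
`n`-tuples of pairwise vertex-disjoint paths `Pᵢ : uᵢ → vᵢ` equals
`det (a_{i,j})`, where `a_{i,j}` is the number of directed paths from `uᵢ` to `vⱼ`. -/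
theorem lgv_lemma {V : Type*} [Fintype V] (E : V → V → Prop)
    (hacyclic : ∀ (v : V) (l : List V), IsDiPath E v v l → l.length ≤ 1)
    (n : ℕ) (u v : Fin n → V)
    (hcompat : ∀ i i' j j' : Fin n, i < i' → j' < j →
      ∀ P Q : List V, IsDiPath E (u i) (v j) P → IsDiPath E (u i') (v j') Q →
        ∃ x, x ∈ P ∧ x ∈ Q) :
    (Nat.card {P : Fin n → List V //
        (∀ i, IsDiPath E (u i) (v i) (P i)) ∧
        ∀ i j : Fin n, i ≠ j → ∀ x ∈ P i, x ∉ P j} : ℤ) =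
      Matrix.det (Matrix.of fun i j : Fin n =>
        (Nat.card {l : List V // IsDiPath E (u i) (v j) l} : ℤ)) := by
  classical
  have hnod : ∀ {a b : V} {l : List V}, IsDiPath E a b l → l.Nodup :=
    fun h => LGVAux.IsDiPath.nodup hacyclic h
  haveI I1 : ∀ a b : V, Finite {l : List V // IsDiPath E a b l} :=
    fun a b => (dipath_finite hacyclic a b).to_subtype
  haveI I2 : ∀ σ : Equiv.Perm (Fin n),
      Fintype {P : Fin n → List V // ∀ k, IsDiPath E (u (σ k)) (v k) (P k)} :=
    fun σ => @Fintype.ofFinite _ (Finite.of_equiv _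
      (Equiv.subtypePiEquivPi (p := fun k l => IsDiPath E (u (σ k)) (v k) l)).symm)
  -- σ must be the identity for a vertex-disjoint system
  have hid : ∀ (σ : Equiv.Perm (Fin n)) (P : Fin n → List V),
      (∀ k, IsDiPath E (u (σ k)) (v k) (P k)) → ¬ Dbl P → σ = 1 := by
    intro σ P hP hnd
    by_contra hσ
    have hex : ∃ k, σ k ≠ k := by
      by_contra hc
      push_neg at hc
      exact hσ (Equiv.ext hc)
    have hs : (Finset.univ.filter fun k => σ k ≠ k).Nonempty :=
      ⟨hex.choose, by simp [hex.choose_spec]⟩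
    set a := (Finset.univ.filter fun k => σ k ≠ k).min' hs with ha_def
    have ha : σ a ≠ a := by
      have := Finset.min'_mem _ hs
      simpa using this
    have hmin : ∀ k, k < a → σ k = k := by
      intro k hk
      by_contra hne
      exact absurd (Finset.min'_le _ k (by simp [hne])) (not_le.mpr hk)
    have haa : a < σ a := by
      rcases lt_trichotomy (σ a) a with hlt | he | h
      · exact absurd (σ.injective (hmin (σ a) hlt)) ha
      · exact absurd he ha
      · exact h
    have hb : σ (σ.symm a) = a := σ.apply_symm_apply a
    have hab : a < σ.symm a := by
      rcases lt_trichotomy (σ.symm a) a with hlt | he | h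
      · exact absurd ((hmin _ hlt).symm.trans hb) hlt.ne
      · rw [he] at hb
        exact absurd hb ha
      · exact h
    obtain ⟨x, hx1, hx2⟩ := hcompat (σ (σ.symm a)) (σ a) (σ.symm a) a
      (by rw [hb]; exact haa) hab (P (σ.symm a)) (P a) (hP (σ.symm a)) (hP a)
    exact hnd ⟨x, σ.symm a, a, hab.ne', hx1, hx2⟩
  -- the signed sum over all path systems
  have main : ∑ t : (Σ σ : Equiv.Perm (Fin n),
        {P : Fin n → List V // ∀ k, IsDiPath E (u (σ k)) (v k) (P k)}),
        ((Equiv.Perm.sign t.1 : ℤˣ) : ℤ)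
      = (Nat.card {P : Fin n → List V //
          (∀ i, IsDiPath E (u i) (v i) (P i)) ∧
          ∀ i j : Fin n, i ≠ j → ∀ x ∈ P i, x ∉ P j} : ℤ) := by
    rw [← Finset.sum_filter_add_sum_filter_not Finset.univ
      (fun t : (Σ σ : Equiv.Perm (Fin n),
        {P : Fin n → List V // ∀ k, IsDiPath E (u (σ k)) (v k) (P k)}) => Dbl t.2.1)]
    have hbad : ∑ t ∈ Finset.univ.filter
        (fun t : (Σ σ : Equiv.Perm (Fin n),
          {P : Fin n → List V // ∀ k, IsDiPath E (u (σ k)) (v k) (P k)}) => Dbl t.2.1),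
        ((Equiv.Perm.sign t.1 : ℤˣ) : ℤ) = 0 := by
      refine Finset.sum_involution
        (fun t ht =>
          ⟨t.1 * Equiv.swap (dblI t.2.1 (Finset.mem_filter.mp ht).2)
              (dblJ t.2.1 (Finset.mem_filter.mp ht).2),
            ⟨dblQ t.2.1 (Finset.mem_filter.mp ht).2,
              dblQ_isDiPath u v t.1 t.2.1 t.2.2 (Finset.mem_filter.mp ht).2⟩⟩)
        ?_ ?_ ?_ ?_
      · intro t ht
        have hne : dblI t.2.1 (Finset.mem_filter.mp ht).2
            ≠ dblJ t.2.1 (Finset.mem_filter.mp ht).2 :=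
          ((dblJ_props _ _).1).symm
        simp [Equiv.Perm.sign_mul, Equiv.Perm.sign_swap hne]
      · rintro ⟨σ', P, hP⟩ ht _ he
        have hd : Dbl P := (Finset.mem_filter.mp ht).2
        have h1 : σ' * Equiv.swap (dblI P hd) (dblJ P hd) = σ' := congrArg Sigma.fst he
        have h2 : Equiv.swap (dblI P hd) (dblJ P hd) = 1 :=
          mul_left_cancel (a := σ') (by rw [mul_one]; exact h1)
        exact (dblJ_props _ _).1 (Equiv.swap_eq_one_iff.mp h2).symm
      · intro t ht
        simp only [Finset.mem_filter, Finset.mem_univ, true_and]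
        exact dbl_dblQ _ _
      · intro t ht
        rcases t with ⟨σ, P, hP⟩
        have hd : Dbl P := (Finset.mem_filter.mp ht).2
        have hnodP : ∀ k, (P k).Nodup := fun k => hnod (hP k)
        have hnodQ : ∀ k, (dblQ P hd k).Nodup :=
          fun k => hnod (dblQ_isDiPath u v σ P hP hd k)
        obtain ⟨e0, e1, e2⟩ := dblQ_dblQ P hd hnodP hnodQ (dbl_dblQ P hd)
        refine Sigma.subtype_ext ?_ ?_
        · show σ * Equiv.swap (dblI P hd) (dblJ P hd) * Equiv.swap _ _ = σ
          rw [show dblI (dblQ P hd) (dbl_dblQ P hd) = dblI P hd from e1,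
              show dblJ (dblQ P hd) (dbl_dblQ P hd) = dblJ P hd from e2,
              mul_assoc, Equiv.swap_mul_self, mul_one]
        · exact e0
    rw [hbad, zero_add]
    have hone : ∀ t ∈ Finset.univ.filter
        (fun t : (Σ σ : Equiv.Perm (Fin n),
          {P : Fin n → List V // ∀ k, IsDiPath E (u (σ k)) (v k) (P k)}) => ¬ Dbl t.2.1),
        ((Equiv.Perm.sign t.1 : ℤˣ) : ℤ) = 1 := by
      intro t ht
      have : t.1 = 1 := hid t.1 t.2.1 t.2.2 (Finset.mem_filter.mp ht).2
      rw [this]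
      simp
    rw [Finset.sum_congr rfl hone, Finset.sum_const, nsmul_eq_mul, mul_one]
    congr 1
    -- cardinality of the good set equals the target count
    have hbij : Function.Bijective
        (fun (P : {P : Fin n → List V //
            (∀ i, IsDiPath E (u i) (v i) (P i)) ∧
            ∀ i j : Fin n, i ≠ j → ∀ x ∈ P i, x ∉ P j}) =>
          (⟨⟨1, ⟨P.1, fun k => P.2.1 k⟩⟩, fun hdd => by
              obtain ⟨x, k, l, hne, hk, hl⟩ := hdd
              exact P.2.2 k l hne x hk hl⟩ :
            {t : (Σ σ : Equiv.Perm (Fin n),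
              {P : Fin n → List V // ∀ k, IsDiPath E (u (σ k)) (v k) (P k)}) //
                ¬ Dbl t.2.1})) := by
      constructor
      · intro P Q he
        have := congrArg (fun t => t.1.2.1) he
        exact Subtype.ext this
      · rintro ⟨⟨σ, P, hP⟩, hgood⟩
        have hσ : σ = 1 := hid σ P hP hgood
        subst hσ
        refine ⟨⟨P, fun i => hP i, fun i j hne x hx hx' => hgood ⟨x, i, j, hne, hx, hx'⟩⟩, rfl⟩
    rw [Nat.card_congr (Equiv.ofBijective _ hbij), Nat.card_eq_fintype_card,
      Fintype.card_subtype]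
  -- now compute the determinant
  rw [Matrix.det_apply', ← main, ← Finset.univ_sigma_univ, Finset.sum_sigma]
  refine Finset.sum_congr rfl fun σ _ => ?_
  have hcard : (∏ i, (Matrix.of fun i j : Fin n =>
      (Nat.card {l : List V // IsDiPath E (u i) (v j) l} : ℤ)) (σ i) i)
      = (Nat.card {P : Fin n → List V // ∀ k, IsDiPath E (u (σ k)) (v k) (P k)} : ℤ) := by
    rw [Nat.card_congr (Equiv.subtypePiEquivPi
      (p := fun k l => IsDiPath E (u (σ k)) (v k) l)), Nat.card_pi, Nat.cast_prod]
    rfl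
  rw [hcard]
  dsimp only
  rw [Finset.sum_const, Finset.card_univ, ← Nat.card_eq_fintype_card, nsmul_eq_mul, mul_comm]
  norm_cast
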